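/- Semantic soundness of the BasicEvt rule: for every basic event Event α and all pre, pst ⊆ S, R, G ⊆ S × S, if ⊨ body(α) sat ⟨pre ∩ guard(α), R, G, pst⟩, stable(pre,R), and Id ⊆ G, then ⊨ Event α sat ⟨pre,R,G,pst⟩. -/
import Mathlib


set_option autoImplicit false

namespace PiCore

/-! ## Syntax of PiCore -/

/-- PiCore programs; `term` is the terminated program `⊥`. -/
inductive Prog (S : Type) : Type where
  | term : Prog S
  | basic : (S → S) → Prog S
  | seq : Prog S → Prog S → Prog S
  | cond : Set S → Prog S → Prog S → Prog S
  | while' : Set S → Prog S → Prog S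
  | await : Set S → Prog S → Prog S
  | nondt : Set (S × S) → Prog S

/-! ## Small-step semantics of programs -/

mutual
/-- Small-step program semantics `(P, s) -c→ (P', s')`. -/
inductive PStep {S : Type} : Prog S × S → Prog S × S → Prop where
  | basic (f : S → S) (s : S) : PStep (.basic f, s) (.term, f s)
  | seq1 {P₁ : Prog S} {s s' : S} (P₂ : Prog S) :
      PStep (P₁, s) (.term, s') → PStep (.seq P₁ P₂, s) (P₂, s')
  | seq2 {P₁ P₁' : Prog S} {s s' : S} (P₂ : Prog S) :
      PStep (P₁, s) (P₁', s') → P₁' ≠ .term → PStep (.seq P₁ P₂, s) (.seq P₁' P₂, s')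
  | condT {b : Set S} {s : S} (P₁ P₂ : Prog S) : s ∈ b → PStep (.cond b P₁ P₂, s) (P₁, s)
  | condF {b : Set S} {s : S} (P₁ P₂ : Prog S) : s ∉ b → PStep (.cond b P₁ P₂, s) (P₂, s)
  | whileT {b : Set S} {s : S} (P : Prog S) : s ∈ b →
      PStep (.while' b P, s) (.seq P (.while' b P), s)
  | whileF {b : Set S} {s : S} (P : Prog S) : s ∉ b → PStep (.while' b P, s) (.term, s)
  | await {b : Set S} {s s' : S} {P : Prog S} : s ∈ b →
      PStepStar (P, s) (.term, s') → PStep (.await b P, s) (.term, s')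
  | nondt {r : Set (S × S)} {s s' : S} : (s, s') ∈ r → PStep (.nondt r, s) (.term, s')

/-- Reflexive transitive closure of `PStep`. -/
inductive PStepStar {S : Type} : Prog S × S → Prog S × S → Prop where
  | refl (c : Prog S × S) : PStepStar c c
  | step {c c' c'' : Prog S × S} : PStep c c' → PStepStar c' c'' → PStepStar c c''
end

/-! ## Events, event systems, parallel event systems -/

/-- A basic event: a label, a guard and a body. -/
structure EvtSpec (L S : Type) : Type where
  label : L
  guard : Set S
  body : Prog S

/-- Events: basic (non-triggered) events and anonymous (triggered) events. -/
inductive Event (L S : Type) : Type where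
  | basic : EvtSpec L S → Event L S
  | anony : Prog S → Event L S

/-- Event contexts. -/
abbrev EvtCtx (L S K : Type) := K → Event L S

/-- The action component of a transition label: a program action `c`
or the occurrence of an event. -/
inductive Act (L S : Type) : Type where
  | cmd : Act L S
  | evt : Event L S → Act L S

/-- Transition labels `t@κ`. -/
abbrev Lbl (L S K : Type) := Act L S × K

/-- Configurations at the level of events. -/
abbrev EConf (L S K : Type) := Event L S × S × EvtCtx L S K

/-- Labelled transitions of events. -/
inductive EStep {L S K : Type} [DecidableEq K] :
    EConf L S K → Lbl L S K → EConf L S K → Prop where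
  | anony {P P' : Prog S} {s s' : S} (x : EvtCtx L S K) (κ : K) :
      PStep (P, s) (P', s') → EStep (.anony P, s, x) (.cmd, κ) (.anony P', s', x)
  | basic (α : EvtSpec L S) {s : S} (x : EvtCtx L S K) (κ : K) : s ∈ α.guard →
      EStep (.basic α, s, x) (.evt (.basic α), κ)
        (.anony α.body, s, Function.update x κ (.basic α))

/-- Event systems: a finite event set `{ℰ₀, …, ℰₙ}` or a sequence `EvtSeq ℰ 𝒮`. -/
inductive EvtSys (L S : Type) : Type where
  | set : (n : ℕ) → (Fin (n + 1) → Event L S) → EvtSys L S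
  | seq : Event L S → EvtSys L S → EvtSys L S

/-- Configurations at the level of event systems. -/
abbrev ESConf (L S K : Type) := EvtSys L S × S × EvtCtx L S K

/-- Labelled transitions of event systems. -/
inductive ESStep {L S K : Type} [DecidableEq K] :
    ESConf L S K → Lbl L S K → ESConf L S K → Prop where
  | set {n : ℕ} {es : Fin (n + 1) → Event L S} (i : Fin (n + 1))
      {s s' : S} {x x' : EvtCtx L S K} {e' : Event L S} {κ : K} :
      EStep (es i, s, x) (.evt (es i), κ) (e', s', x') →
      ESStep (.set n es, s, x) (.evt (es i), κ) (.seq e' (.set n es), s', x')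
  | seq1 {e e' : Event L S} (𝒮 : EvtSys L S) {s s' : S} {x x' : EvtCtx L S K}
      {l : Lbl L S K} :
      EStep (e, s, x) l (e', s', x') → e' ≠ .anony .term →
      ESStep (.seq e 𝒮, s, x) l (.seq e' 𝒮, s', x')
  | seq2 {e : Event L S} (𝒮 : EvtSys L S) {s s' : S} {x x' : EvtCtx L S K}
      {l : Lbl L S K} :
      EStep (e, s, x) l (.anony .term, s', x') →
      ESStep (.seq e 𝒮, s, x) l (𝒮, s', x')

/-- Parallel event systems. -/
abbrev PES (L S K : Type) := K → EvtSys L S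

/-- Configurations at the level of parallel event systems. -/
abbrev PConf (L S K : Type) := PES L S K × S × EvtCtx L S K

/-- Labelled transitions of parallel event systems. -/
inductive PESStep {L S K : Type} [DecidableEq K] :
    PConf L S K → Lbl L S K → PConf L S K → Prop where
  | par {ps : PES L S K} {κ : K} {t : Act L S} {s s' : S} {x x' : EvtCtx L S K}
      {es' : EvtSys L S} :
      ESStep (ps κ, s, x) (t, κ) (es', s', x') →
      PESStep (ps, s, x) (t, κ) (Function.update ps κ es', s', x')

/-! ## Computations -/

section Computation

variable {σ S X : Type}

/-- An environment transition between two configurations: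
the specification component is unchanged. -/
def EnvTr (c c' : σ × S × X) : Prop := c.1 = c'.1

/-- Computations: nonempty lists of configurations in which every consecutive pair
is an environment transition or an action transition of the semantics. -/
inductive Comp (step : σ × S × X → σ × S × X → Prop) : List (σ × S × X) → Prop where
  | one (c : σ × S × X) : Comp step [c]
  | env {sp : σ} {s₁ s₂ : S} {x₁ x₂ : X} {cs : List (σ × S × X)} :
      Comp step ((sp, s₁, x₁) :: cs) → Comp step ((sp, s₂, x₂) :: (sp, s₁, x₁) :: cs)
  | act {c c' : σ × S × X} {cs : List (σ × S × X)} :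
      step c c' → Comp step (c' :: cs) → Comp step (c :: c' :: cs)

/-- `Ψ(♯, s, x)`: the computations starting in the configuration `(♯, s, x)`. -/
def cpts (step : σ × S × X → σ × S × X → Prop) (sp : σ) (s : S) (x : X) :
    Set (List (σ × S × X)) :=
  {ϖ | Comp step ϖ ∧ ϖ.head? = some (sp, s, x)}

/-- The assumption `A(pre, R)`. -/
def Assum (pre : Set S) (R : Set (S × S)) : Set (List (σ × S × X)) :=
  {ϖ | (∀ c, ϖ.head? = some c → c.2.1 ∈ pre) ∧
    ∀ i c c', ϖ[i]? = some c → ϖ[i + 1]? = some c' → EnvTr c c' →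
      (c.2.1, c'.2.1) ∈ R}

/-- The commitment `C(G, pst)` (`fin` tells when a specification is terminated). -/
def Commit (step : σ × S × X → σ × S × X → Prop) (fin : σ → Prop)
    (G : Set (S × S)) (pst : Set S) : Set (List (σ × S × X)) :=
  {ϖ | (∀ i c c', ϖ[i]? = some c → ϖ[i + 1]? = some c' → step c c' →
      (c.2.1, c'.2.1) ∈ G) ∧
    ∀ c, ϖ.getLast? = some c → fin c.1 → c.2.1 ∈ pst}

end Computation

/-! ## Validity of rely-guarantee specifications -/

section Validity

variable {L S K : Type}

/-- Program action transitions lifted to configurations with a trivial event context. -/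
def pstepL {S : Type} (c c' : Prog S × S × Unit) : Prop :=
  PStep (c.1, c.2.1) (c'.1, c'.2.1)

/-- Action transitions of events (any label). -/
def estepAny [DecidableEq K] (c c' : EConf L S K) : Prop := ∃ l, EStep c l c'

/-- Action transitions of event systems (any label). -/
def esstepAny [DecidableEq K] (c c' : ESConf L S K) : Prop := ∃ l, ESStep c l c'

/-- Action transitions of parallel event systems (any label). -/
def pesstepAny [DecidableEq K] (c c' : PConf L S K) : Prop := ∃ l, PESStep c l c'

/-- A terminated program. -/
def progFin : Prog S → Prop := fun P => P = .term

/-- A terminated event. -/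
def evtFin : Event L S → Prop := fun e => e = .anony .term

/-- Event systems have no terminated form. -/
def esysFin : EvtSys L S → Prop := fun _ => False

/-- Parallel event systems have no terminated form. -/
def pesFin : PES L S K → Prop := fun _ => False

/-- Validity `⊨ P sat ⟨pre, R, G, pst⟩` for programs. -/
def progValid (P : Prog S) (pre : Set S) (R G : Set (S × S)) (pst : Set S) : Prop :=
  ∀ s : S, cpts pstepL P s () ∩ Assum pre R ⊆ Commit pstepL progFin G pst

/-- Validity `⊨ ℰ sat ⟨pre, R, G, pst⟩` for events. -/
def evtValid [DecidableEq K] (e : Event L S) (pre : Set S) (R G : Set (S × S))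
    (pst : Set S) : Prop :=
  ∀ (s : S) (x : EvtCtx L S K),
    cpts estepAny e s x ∩ Assum pre R ⊆ Commit estepAny evtFin G pst

/-- Validity `⊨ 𝒮 sat ⟨pre, R, G, pst⟩` for event systems. -/
def esysValid [DecidableEq K] (es : EvtSys L S) (pre : Set S) (R G : Set (S × S))
    (pst : Set S) : Prop :=
  ∀ (s : S) (x : EvtCtx L S K),
    cpts esstepAny es s x ∩ Assum pre R ⊆ Commit esstepAny esysFin G pst

/-- Validity `⊨ 𝒫𝒮 sat ⟨pre, R, G, pst⟩` for parallel event systems. -/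
def pesValid [DecidableEq K] (ps : PES L S K) (pre : Set S) (R G : Set (S × S))
    (pst : Set S) : Prop :=
  ∀ (s : S) (x : EvtCtx L S K),
    cpts pesstepAny ps s x ∩ Assum pre R ⊆ Commit pesstepAny pesFin G pst

end Validity

/-! ## The rely-guarantee proof system -/

/-- Specifications: programs, events, event systems, or parallel event systems. -/
inductive Spec (L S K : Type) : Type where
  | prog : Prog S → Spec L S K
  | evt : Event L S → Spec L S K
  | esys : EvtSys L S → Spec L S K
  | pes : PES L S K → Spec L S K

/-- A specification that is not a parallel event system. -/
def Spec.noPar {L S K : Type} : Spec L S K → Prop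
  | .pes _ => False
  | _ => True

/-- Uniform validity `⊨ ♯ sat ⟨pre, R, G, pst⟩`. -/
def RGValid {L S K : Type} [DecidableEq K] :
    Spec L S K → Set S → Set (S × S) → Set (S × S) → Set S → Prop
  | .prog P, pre, R, G, pst => progValid P pre R G pst
  | .evt e, pre, R, G, pst => evtValid (K := K) e pre R G pst
  | .esys es, pre, R, G, pst => esysValid (K := K) es pre R G pst
  | .pes ps, pre, R, G, pst => pesValid ps pre R G pst

/-- `stable f g`. -/
def stable {α : Type} (f : Set α) (g : Set (α × α)) : Prop :=
  ∀ x y, x ∈ f → (x, y) ∈ g → y ∈ f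

/-- The identity relation on a state space. -/
def idRel {S : Type} : Set (S × S) := {p | p.1 = p.2}

/-- The rely-guarantee proof system `⊢ ♯ sat ⟨pre, R, G, pst⟩`. -/
inductive RGDeriv {L S K : Type} [DecidableEq K] :
    Spec L S K → Set S → Set (S × S) → Set (S × S) → Set S → Prop where
  | basic {f : S → S} {pre pst : Set S} {R G : Set (S × S)} :
      pre ⊆ {s | f s ∈ pst} →
      {p : S × S | p.1 ∈ pre ∧ p.2 = f p.1} ⊆ G →
      stable pre R → stable pst R →
      RGDeriv (.prog (.basic f)) pre R G pst
  | seq {P Q : Prog S} {pre m pst : Set S} {R G : Set (S × S)} :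
      RGDeriv (.prog P) pre R G m → RGDeriv (.prog Q) m R G pst →
      RGDeriv (.prog (.seq P Q)) pre R G pst
  | cond {b : Set S} {P₁ P₂ : Prog S} {pre pst : Set S} {R G : Set (S × S)} :
      RGDeriv (.prog P₁) (pre ∩ b) R G pst →
      RGDeriv (.prog P₂) (pre ∩ bᶜ) R G pst →
      stable pre R → idRel ⊆ G →
      RGDeriv (.prog (.cond b P₁ P₂)) pre R G pst
  | whileR {b : Set S} {P : Prog S} {pre pst : Set S} {R G : Set (S × S)} :
      RGDeriv (.prog P) (pre ∩ b) R G pre →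
      pre ∩ bᶜ ⊆ pst →
      stable pre R → stable pst R → idRel ⊆ G →
      RGDeriv (.prog (.while' b P)) pre R G pst
  | awaitR {b : Set S} {P : Prog S} {pre pst : Set S} {R G : Set (S × S)} :
      (∀ V : S, RGDeriv (.prog P) (pre ∩ b ∩ {V}) idRel Set.univ
        ({s | (V, s) ∈ G} ∩ pst)) →
      stable pre R → stable pst R →
      RGDeriv (.prog (.await b P)) pre R G pst
  | nondt {r : Set (S × S)} {pre pst : Set S} {R G : Set (S × S)} :
      pre ⊆ {s | (∀ s', (s, s') ∈ r → s' ∈ pst) ∧ ∃ s', (s, s') ∈ r} →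
      {p : S × S | p.1 ∈ pre ∧ p ∈ r} ⊆ G →
      stable pre R → stable pst R →
      RGDeriv (.prog (.nondt r)) pre R G pst
  | conseq {sp : Spec L S K} {pre pre' pst pst' : Set S} {R R' G G' : Set (S × S)} :
      sp.noPar →
      pre ⊆ pre' → R ⊆ R' → G' ⊆ G → pst' ⊆ pst →
      RGDeriv sp pre' R' G' pst' →
      RGDeriv sp pre R G pst
  | unPre {P : Prog S} {pre pre' pst : Set S} {R G : Set (S × S)} :
      RGDeriv (.prog P) pre R G pst → RGDeriv (.prog P) pre' R G pst →
      RGDeriv (.prog P) (pre ∪ pre') R G pst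
  | intPost {P : Prog S} {pre pst pst' : Set S} {R G : Set (S × S)} :
      RGDeriv (.prog P) pre R G pst → RGDeriv (.prog P) pre R G pst' →
      RGDeriv (.prog P) pre R G (pst ∩ pst')
  | univPre {P : Prog S} {pre pst : Set S} {R G : Set (S × S)} :
      (∀ v ∈ pre, RGDeriv (.prog P) {v} R G pst) →
      RGDeriv (.prog P) pre R G pst
  | emptyPre {P : Prog S} {pst : Set S} {R G : Set (S × S)} :
      RGDeriv (.prog P) ∅ R G pst
  | inner {P : Prog S} {pre pst : Set S} {R G : Set (S × S)} :
      RGDeriv (.prog P) pre R G pst →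
      RGDeriv (.evt (.anony P)) pre R G pst
  | basicEvt {α : EvtSpec L S} {pre pst : Set S} {R G : Set (S × S)} :
      RGDeriv (.prog α.body) (pre ∩ α.guard) R G pst →
      stable pre R → idRel ⊆ G →
      RGDeriv (.evt (.basic α)) pre R G pst
  | evtSeq {e : Event L S} {𝒮 : EvtSys L S} {pre m pst : Set S} {R G : Set (S × S)} :
      RGDeriv (.evt e) pre R G m → RGDeriv (.esys 𝒮) m R G pst →
      RGDeriv (.esys (.seq e 𝒮)) pre R G pst
  | evtSet {n : ℕ} {es : Fin (n + 1) → Event L S} {pre pst : Set S}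
      {R G : Set (S × S)} {pres psts : Fin (n + 1) → Set S}
      {Rs Gs : Fin (n + 1) → Set (S × S)} :
      (∀ i, RGDeriv (.evt (es i)) (pres i) (Rs i) (Gs i) (psts i)) →
      (∀ i j, psts i ⊆ pres j) →
      (∀ i, pre ⊆ pres i) → (∀ i, psts i ⊆ pst) →
      (∀ i, R ⊆ Rs i) → (∀ i, Gs i ⊆ G) →
      stable pre R → idRel ⊆ G →
      RGDeriv (.esys (.set n es)) pre R G pst
  | par {ps : PES L S K} {pre pst : Set S} {R G : Set (S × S)}
      {pres psts : K → Set S} {Rs Gs : K → Set (S × S)} :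
      (∀ κ, RGDeriv (.esys (ps κ)) (pres κ) (Rs κ) (Gs κ) (psts κ)) →
      (∀ κ, pre ⊆ pres κ) → (∀ κ, psts κ ⊆ pst) →
      (∀ κ, Gs κ ⊆ G) → (∀ κ, R ⊆ Rs κ) →
      (∀ κ κ', κ ≠ κ' → Gs κ ⊆ Rs κ') →
      RGDeriv (.pes ps) pre R G pst


/-! ## Serialization and compositionality machinery -/

/-- The set of events occurring syntactically in an event system. -/
def EvtSys.evts {L S : Type} : EvtSys L S → Set (Event L S)
  | .set _ es => Set.range es
  | .seq e 𝒮 => insert e 𝒮.evts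

/-- Similarity (simulation) of two computations, possibly over different
specification types: same length, and at each position the states and event
contexts coincide and the steps are the same labelled action transitions
(resp. environment transitions). -/
def Similar {σ₁ σ₂ S X Λ : Type}
    (st₁ : σ₁ × S × X → Λ → σ₁ × S × X → Prop)
    (st₂ : σ₂ × S × X → Λ → σ₂ × S × X → Prop)
    (w₁ : List (σ₁ × S × X)) (w₂ : List (σ₂ × S × X)) : Prop :=
  w₁.length = w₂.length ∧
  ∀ i c₁ c₁' c₂ c₂', w₁[i]? = some c₁ → w₁[i + 1]? = some c₁' →
    w₂[i]? = some c₂ → w₂[i + 1]? = some c₂' →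
    c₁.2.1 = c₂.2.1 ∧ c₁.2.2 = c₂.2.2 ∧
    (∀ δ, st₁ c₁ δ c₁' ↔ st₂ c₂ δ c₂') ∧
    (EnvTr c₁ c₁' ↔ EnvTr c₂ c₂')

/-- The computations of an event (from an arbitrary initial state and
event context). -/
def cptsOfEvt {L S K : Type} [DecidableEq K] (e : Event L S) :
    Set (List (EConf L S K)) :=
  {w | Comp estepAny w ∧ ∃ s x, w.head? = some (e, s, x)}

/-- A computation `w` of a parallel event system and a family `cf` of
computations of event systems conjoin, `w ∝ cf` (Definition 2). -/
def Conjoin {L S K : Type} [DecidableEq K] (w : List (PConf L S K))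
    (cf : K → List (ESConf L S K)) : Prop :=
  (∀ κ, (cf κ).length = w.length) ∧
  (∀ (κ : K) (j : ℕ) c c', w[j]? = some c → (cf κ)[j]? = some c' →
    c.2.1 = c'.2.1 ∧ c.2.2 = c'.2.2 ∧ c.1 κ = c'.1) ∧
  (∀ (j : ℕ) c c', w[j]? = some c → w[j + 1]? = some c' →
    (EnvTr c c' ∧
      ∀ κ d d', (cf κ)[j]? = some d → (cf κ)[j + 1]? = some d' → EnvTr d d') ∨
    (∃ (t : Act L S) (κ₁ : K), PESStep c (t, κ₁) c' ∧
      (∀ d d', (cf κ₁)[j]? = some d → (cf κ₁)[j + 1]? = some d' →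
        ESStep d (t, κ₁) d') ∧
      (∀ κ, κ ≠ κ₁ → ∀ d d', (cf κ)[j]? = some d → (cf κ)[j + 1]? = some d' →
        EnvTr d d')))


/-! ### Auxiliary lemmas for soundness of BasicEvt -/

section BasicEvtSound

theorem pstep_ne {S : Type} : ∀ (P : Prog S) {s : S} {P' : Prog S} {s' : S},
    PStep (P, s) (P', s') → P ≠ P' := by
  intro P
  induction P with
  | term => intro s P' s' h; cases h
  | basic f => intro s P' s' h; cases h; simp
  | seq P₁ P₂ ih₁ ih₂ =>
      intro s P' s' h
      cases h with
      | seq1 _ hstep =>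
          intro heq
          have := congrArg SizeOf.sizeOf heq
          simp at this <;> omega
      | seq2 _ hstep hne =>
          intro heq
          injection heq with hA hB
          exact ih₁ hstep hA
  | cond b P₁ P₂ ih₁ ih₂ =>
      intro s P' s' h
      cases h with
      | condT _ _ hb =>
          intro heq
          have := congrArg SizeOf.sizeOf heq
          simp at this <;> omega
      | condF _ _ hb =>
          intro heq
          have := congrArg SizeOf.sizeOf heq
          simp at this <;> omega
  | while' b P ih =>
      intro s P' s' h
      cases h with
      | whileT _ hb => simp
      | whileF _ hb => simp
  | await b P ih =>
      intro s P' s' h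
      cases h <;> simp
  | nondt r =>
      intro s P' s' h
      cases h <;> simp

variable {σ S X : Type}

theorem comp_pairs {step : σ × S × X → σ × S × X → Prop} {w : List (σ × S × X)}
    (h : Comp step w) :
    ∀ i c c', w[i]? = some c → w[i + 1]? = some c' → EnvTr c c' ∨ step c c' := by
  induction h with
  | one c => intro i c c' h1 h2; simp at h2
  | env h ih =>
      intro i c c' h1 h2
      cases i with
      | zero =>
          simp at h1 h2
          subst h1; subst h2
          exact Or.inl rfl
      | succ j => exact ih j c c' (by simpa using h1) (by simpa using h2)
  | act hs h ih =>
      intro i c c' h1 h2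
      cases i with
      | zero =>
          simp at h1 h2
          subst h1; subst h2
          exact Or.inr hs
      | succ j => exact ih j c c' (by simpa using h1) (by simpa using h2)

theorem commit_cons {step : σ × S × X → σ × S × X → Prop} {fin : σ → Prop}
    {G : Set (S × S)} {pst : Set S} {a b : σ × S × X} {cs : List (σ × S × X)}
    (h : (b :: cs) ∈ Commit step fin G pst)
    (h0 : step a b → (a.2.1, b.2.1) ∈ G) :
    (a :: b :: cs) ∈ Commit step fin G pst := by
  constructor
  · intro i c c' h1 h2 hst
    cases i with
    | zero =>
        simp at h1 h2
        subst h1; subst h2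
        exact h0 hst
    | succ j => exact h.1 j c c' (by simpa using h1) (by simpa using h2) hst
  · intro c hc hfin
    exact h.2 c (by simpa [List.getLast?_cons_cons] using hc) hfin

variable {L K : Type} [DecidableEq K]

/-- The program underlying an event (terminated program for basic events). -/
def progOf : Event L S → Prog S
  | .anony P => P
  | .basic _ => .term

/-- Forget the event context and turn an anonymous event into its program. -/
def toProg (c : EConf L S K) : Prog S × S × Unit := (progOf c.1, c.2.1, ())

theorem anonyChain {w : List (EConf L S K)} (h : Comp estepAny w) :
    ∀ {P : Prog S} {s : S} {x : EvtCtx L S K}, w.head? = some (.anony P, s, x) →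
      Comp pstepL (w.map toProg) ∧
        ∀ (i : ℕ) (c : EConf L S K), w[i]? = some c →
          ∃ Q, c.1 = Event.anony Q := by
  induction h with
  | one c =>
      intro P s x hhead
      simp at hhead
      subst hhead
      refine ⟨Comp.one _, ?_⟩
      intro i c hc
      cases i with
      | zero => simp at hc; subst hc; exact ⟨P, rfl⟩
      | succ j => simp at hc
  | @env sp s₁ s₂ x₁ x₂ cs h ih =>
      intro P s x hhead
      simp only [List.head?_cons, Option.some.injEq, Prod.mk.injEq] at hhead
      obtain ⟨hsp, hss, hxx⟩ := hhead
      subst hsp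
      obtain ⟨hcomp, hall⟩ := ih (P := P) (s := s₁) (x := x₁) rfl
      refine ⟨?_, ?_⟩
      · have hcomp' : Comp pstepL ((P, s₁, ()) :: cs.map toProg) := by
          simpa [toProg, progOf] using hcomp
        have := Comp.env (sp := P) (s₂ := s₂) (x₂ := ()) hcomp'
        simpa [toProg, progOf] using this
      · intro i c hc
        cases i with
        | zero => simp at hc; subst hc; exact ⟨P, rfl⟩
        | succ j => exact hall j c (by simpa using hc)
  | @act c c' cs hs h ih =>
      intro P s x hhead
      simp at hhead
      subst hhead
      obtain ⟨l, hstep⟩ := hs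
      cases hstep with
      | anony x κ hp =>
          obtain ⟨hcomp, hall⟩ := ih rfl
          refine ⟨?_, ?_⟩
          · exact Comp.act (by simpa [pstepL, toProg, progOf] using hp) hcomp
          · intro i c hc
            cases i with
            | zero => simp at hc; subst hc; exact ⟨P, rfl⟩
            | succ j => exact hall j c (by simpa using hc)

theorem anony_commit {P : Prog S} {pre' pst : Set S} {R G : Set (S × S)}
    (hv : progValid P pre' R G pst) {w : List (EConf L S K)}
    (h : Comp estepAny w) {s : S} {x : EvtCtx L S K}
    (hhead : w.head? = some (.anony P, s, x)) (hs : s ∈ pre')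
    (henv : ∀ i c c', w[i]? = some c → w[i + 1]? = some c' → EnvTr c c' →
      (c.2.1, c'.2.1) ∈ R) :
    w ∈ Commit estepAny evtFin G pst := by
  obtain ⟨hcomp, hall⟩ := anonyChain h hhead
  have hmhead : (w.map toProg).head? = some (P, s, ()) := by
    rw [List.head?_map, hhead]; rfl
  have hassum : (w.map toProg) ∈ Assum pre' R := by
    constructor
    · intro c hc
      rw [hmhead] at hc
      injection hc with hc
      subst hc
      exact hs
    · intro i c c' h1 h2 he
      rw [List.getElem?_map] at h1 h2
      obtain ⟨c₀, hc₀, rfl⟩ := Option.map_eq_some_iff.1 h1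
      obtain ⟨c₀', hc₀', rfl⟩ := Option.map_eq_some_iff.1 h2
      rcases comp_pairs h i c₀ c₀' hc₀ hc₀' with henv' | hstep
      · exact henv i c₀ c₀' hc₀ hc₀' henv'
      · exfalso
        obtain ⟨Q, hQ⟩ := hall i c₀ hc₀
        obtain ⟨l, hstep⟩ := hstep
        rw [show c₀ = (c₀.1, c₀.2.1, c₀.2.2) from rfl, hQ] at hstep
        cases hstep with
        | anony _ _ hp =>
            refine pstep_ne _ hp ?_
            simpa [EnvTr, toProg, progOf, hQ] using he
  have hc := hv s ⟨⟨hcomp, hmhead⟩, hassum⟩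
  constructor
  · intro i c c' h1 h2 hst
    obtain ⟨Q, hQ⟩ := hall i c h1
    obtain ⟨l, hstep⟩ := hst
    rw [show c = (c.1, c.2.1, c.2.2) from rfl, hQ] at hstep
    cases hstep with
    | @anony _ P' _ s' x₀ κ hp =>
        have := hc.1 i (toProg c) (toProg (Event.anony P', s', c.2.2))
          (by rw [List.getElem?_map, h1]; rfl)
          (by rw [List.getElem?_map, h2]; rfl)
          (by simp only [pstepL, toProg]; rw [hQ]; simpa [progOf] using hp)
        simpa [toProg] using this
  · intro c hc' hfin
    have hlast : (w.map toProg).getLast? = some (toProg c) := by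
      rw [List.getLast?_map, hc']; rfl
    have : progFin (toProg c).1 := by
      simp only [evtFin] at hfin
      simp [toProg, hfin, progOf, progFin]
    simpa [toProg] using hc.2 (toProg c) hlast this

theorem basic_commit (α : EvtSpec L S) {pre pst : Set S} {R G : Set (S × S)}
    (h1 : progValid α.body (pre ∩ α.guard) R G pst)
    (h2 : stable pre R) (h3 : idRel ⊆ G) :
    ∀ {w : List (EConf L S K)}, Comp estepAny w →
      ∀ {s : S} {x : EvtCtx L S K}, w.head? = some (Event.basic α, s, x) →
        s ∈ pre →
        (∀ i c c', w[i]? = some c → w[i + 1]? = some c' → EnvTr c c' →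
          (c.2.1, c'.2.1) ∈ R) →
        w ∈ Commit estepAny evtFin G pst := by
  intro w h
  induction h with
  | one c =>
      intro s x hhead hs henv
      simp at hhead
      subst hhead
      constructor
      · intro i c c' h1' h2' hst; simp at h2'
      · intro c hc hfin
        simp at hc
        subst hc
        simp [evtFin] at hfin
  | @env sp s₁ s₂ x₁ x₂ cs h ih =>
      intro s x hhead hs henv
      simp only [List.head?_cons, Option.some.injEq, Prod.mk.injEq] at hhead
      obtain ⟨hsp, hss, hxx⟩ := hhead
      subst hsp; subst hss; subst hxx
      have hR : (s₂, s₁) ∈ R := henv 0 (Event.basic α, s₂, x₂)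
        (Event.basic α, s₁, x₁) (by simp) (by simp) rfl
      have hs₁ : s₁ ∈ pre := h2 s₂ s₁ hs hR
      have htail := ih rfl hs₁ (fun i c c' ha hb he =>
        henv (i + 1) c c' (by simpa using ha) (by simpa using hb) he)
      refine commit_cons htail ?_
      rintro ⟨l, hstep⟩
      cases hstep
  | @act c c' cs hs' h ih =>
      intro s x hhead hs henv
      simp at hhead
      subst hhead
      obtain ⟨l, hstep⟩ := hs'
      cases hstep with
      | basic _ _ κ hguard =>
          have htail := anony_commit h1 h rfl ⟨hs, hguard⟩
            (fun i c c' ha hb he =>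
              henv (i + 1) c c' (by simpa using ha) (by simpa using hb) he)
          refine commit_cons htail ?_
          intro _
          exact h3 rfl

end BasicEvtSound

/-- **Semantic soundness of the BasicEvt rule.** -/
theorem basicevt_rule_sound {L S K : Type} [DecidableEq K]
    (α : EvtSpec L S) (pre pst : Set S) (R G : Set (S × S))
    (h1 : progValid α.body (pre ∩ α.guard) R G pst)
    (h2 : stable pre R) (h3 : idRel ⊆ G) :
    evtValid (K := K) (Event.basic α) pre R G pst := by
  intro s x w hw
  obtain ⟨⟨hcomp, hhead⟩, hpre, henv⟩ := hw
  exact basic_commit α h1 h2 h3 hcomp hhead (hpre _ hhead) henv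

end PiCore
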